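/- arXiv:2004.14785 — 3 statements merged into one kernel-verified Lean document; each statement's English description precedes it below -/
import Mathlib

section
/- Inclusion–exclusion for the Gauss diagram pairing: let G₀ be a finite set (Gauss diagram) with a distinguished subset P of 'semi-virtual' chords, |P| = p. For a fixed finite set A with |A| = n₀ < p, we have ∑_{Q ⊆ P} (-1)^{p - |Q|} ⟨A, (G₀ \ P) ∪ Q⟩ = 0, where ⟨A, D⟩ = ∑_{D' ⊆ D} [A = D']. -/
/-! The pairing ⟨A, (G₀ \ P) ∪ Q⟩ is the indicator of `A ⊆ (G₀ \ P) ∪ Q`. Since `|A| < |P|`, some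
chord `x ∈ P` is not in `A`, and adding or removing `x` from `Q` does not change this indicator
while it flips the sign `(-1) ^ (p - |Q|)`; so the terms cancel in pairs `Q`, `insert x Q`. -/

namespace Finset

variable {C R : Type*} [DecidableEq C] [Ring R]

theorem sum_powerset_neg_one_pow_card_sub_mul_eq_zero {P : Finset C} {x : C} (hx : x ∈ P)
    (f : Finset C → R) (hf : ∀ Q, f (insert x Q) = f Q) :
    ∑ Q ∈ P.powerset, (-1 : R) ^ (#P - #Q) * f Q = 0 := by
  have hxP : x ∉ P.erase x := notMem_erase x P
  rw [← insert_erase hx, sum_powerset_insert hxP, ← sum_add_distrib, card_insert_of_notMem hxP]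
  refine sum_eq_zero fun Q hQ => ?_
  have hQle : #Q ≤ #(P.erase x) := card_le_card (mem_powerset.1 hQ)
  have hxQ : x ∉ Q := fun h => hxP (mem_powerset.1 hQ h)
  rw [card_insert_of_notMem hxQ, hf, Nat.succ_sub hQle, Nat.add_sub_add_right, pow_succ]
  noncomm_ring

theorem sum_powerset_ite_eq (A X : Finset C) :
    ∑ D ∈ X.powerset, (if A = D then (1 : R) else 0) = if A ⊆ X then 1 else 0 := by
  simp only [sum_ite_eq, mem_powerset]

end Finset

open Finset in
theorem stmt_9_general {C : Type*} [DecidableEq C] (G₀ P A : Finset C)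
    (p n₀ : ℕ) (hp : P.card = p) (hA : A.card = n₀)
    (hlt : n₀ < p) :
    ∑ Q ∈ P.powerset, (-1 : ℤ) ^ (p - Q.card) *
      ∑ D' ∈ ((G₀ \ P) ∪ Q).powerset, (if A = D' then (1 : ℤ) else 0) = 0 := by
  obtain ⟨x, hxP, hxA⟩ := exists_mem_notMem_of_card_lt_card (hA.trans_lt (hlt.trans_eq hp.symm))
  simp only [sum_powerset_ite_eq, ← hp]
  refine sum_powerset_neg_one_pow_card_sub_mul_eq_zero hxP _ fun Q => ?_
  simp only [union_insert, subset_insert_iff_of_notMem hxA]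

theorem stmt_9 {C : Type*} [DecidableEq C] (G₀ P A : Finset C)
    (hP : P ⊆ G₀) (p n₀ : ℕ) (hp : P.card = p) (hA : A.card = n₀)
    (hlt : n₀ < p) :
    ∑ Q ∈ P.powerset, (-1 : ℤ) ^ (p - Q.card) *
      ∑ D' ∈ ((G₀ \ P) ∪ Q).powerset, (if A = D' then (1 : ℤ) else 0) = 0 :=
  stmt_9_general G₀ P A p n₀ hp hA hlt
end

section
/- More generally, for a linear combination ∑_{i=1}^{t} λ_i A_i of finite sets (arrow diagrams) with n₀ = max_i |A_i|, and any finite set G₀ with a distinguished subset P of size p > n₀: ∑_{Q ⊆ P} (-1)^{p-|Q|} ∑_{i=1}^t λ_i ⟨A_i, (G₀ \ P) ∪ Q⟩ = 0. -/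
/-!
Pairing `A` with a diagram counts the subdiagrams equal to `A`, so `⟨A, D⟩ = [A ⊆ D]`. For a
single `A`, the condition `A ⊆ (G₀ \ P) ∪ Q` only involves `S := A \ (G₀ \ P)`, and the
alternating sum of `(-1)^|P \ Q|` over `S ⊆ Q ⊆ P` vanishes unless `S = P`, which is ruled out
by `|S| ≤ |A| ≤ n₀ < |P|`.
-/

namespace Finset

variable {α : Type*} [DecidableEq α]

theorem sum_powerset_eq_indicator_subset (A D : Finset α) :
    ∑ D' ∈ D.powerset, (if A = D' then (1 : ℤ) else 0) = if A ⊆ D then 1 else 0 := by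
  simp only [sum_ite_eq, mem_powerset]

/-- Möbius inversion on the boolean lattice: complementing in `P` turns the interval `[S, P]`
into the powerset of `P \ S`. -/
theorem sum_superset_neg_one_pow_card_sdiff (S P : Finset α) :
    ∑ Q ∈ P.powerset with S ⊆ Q, (-1 : ℤ) ^ #(P \ Q) = if S = P then 1 else 0 := by
  by_cases hSP : S ⊆ P
  · have hcompl : ∑ Q ∈ P.powerset with S ⊆ Q, (-1 : ℤ) ^ #(P \ Q)
        = ∑ R ∈ (P \ S).powerset, (-1 : ℤ) ^ #R := by
      refine sum_nbij' (P \ ·) (P \ ·) ?_ ?_ ?_ ?_ (fun _ _ => rfl)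
      · intro Q hQ
        rw [mem_filter, mem_powerset] at hQ
        exact mem_powerset.mpr (sdiff_subset_sdiff subset_rfl hQ.2)
      · intro R hR
        rw [mem_powerset] at hR
        rw [mem_filter, mem_powerset]
        exact ⟨sdiff_subset, subset_sdiff.mpr ⟨hSP, (subset_sdiff.mp hR).2.symm⟩⟩
      · intro Q hQ
        exact Finset.sdiff_sdiff_eq_self (mem_powerset.mp (mem_filter.mp hQ).1)
      · intro R hR
        exact Finset.sdiff_sdiff_eq_self ((mem_powerset.mp hR).trans sdiff_subset)
    rw [hcompl, sum_powerset_neg_one_pow_card]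
    exact if_congr (sdiff_eq_empty_iff_subset.trans ⟨hSP.antisymm, fun h => h ▸ subset_rfl⟩)
      rfl rfl
  · have hempty : {Q ∈ P.powerset | S ⊆ Q} = ∅ :=
      filter_false_of_mem fun Q hQ hSQ => hSP (hSQ.trans (mem_powerset.mp hQ))
    rw [hempty, sum_empty, if_neg fun h => hSP h.le]

theorem sum_powerset_neg_one_pow_mul_indicator_subset_union {A P : Finset α}
    (hAP : #A < #P) (B : Finset α) :
    ∑ Q ∈ P.powerset, (-1 : ℤ) ^ #(P \ Q) * (if A ⊆ B ∪ Q then 1 else 0) = 0 := by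
  have hcover : ∀ Q, A ⊆ B ∪ Q ↔ A \ B ⊆ Q := fun _ => sdiff_le_iff.symm
  simp_rw [mul_ite, mul_one, mul_zero, hcover, ← sum_filter, sum_superset_neg_one_pow_card_sdiff]
  refine if_neg fun h => hAP.not_ge ?_
  exact h ▸ card_le_card sdiff_subset

end Finset

open Finset in
theorem stmt_10_general {C : Type*} [DecidableEq C] (t : ℕ) (lam : Fin t → ℤ)
    (A : Fin t → Finset C) (n₀ : ℕ)
    (hmax : ∀ i, (A i).card ≤ n₀)
    (G₀ P : Finset C) (p : ℕ) (hp : P.card = p) (hlt : n₀ < p) :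
    ∑ Q ∈ P.powerset, (-1 : ℤ) ^ (p - Q.card) *
      ∑ i : Fin t, lam i *
        ∑ D' ∈ ((G₀ \ P) ∪ Q).powerset, (if A i = D' then (1 : ℤ) else 0) = 0 := by
  subst hp
  simp_rw [sum_powerset_eq_indicator_subset, mul_sum]
  rw [sum_comm]
  refine sum_eq_zero fun i _ => ?_
  calc ∑ Q ∈ P.powerset, (-1 : ℤ) ^ (#P - #Q) * (lam i * if A i ⊆ G₀ \ P ∪ Q then 1 else 0)
      = lam i * ∑ Q ∈ P.powerset, (-1 : ℤ) ^ #(P \ Q) * (if A i ⊆ G₀ \ P ∪ Q then 1 else 0) := by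
        rw [mul_sum]
        refine sum_congr rfl fun Q hQ => ?_
        rw [card_sdiff_of_subset (mem_powerset.mp hQ), mul_left_comm]
    _ = 0 := by
        rw [sum_powerset_neg_one_pow_mul_indicator_subset_union ((hmax i).trans_lt hlt), mul_zero]

theorem stmt_10 {C : Type*} [DecidableEq C] (t : ℕ) (lam : Fin t → ℤ)
    (A : Fin t → Finset C) (n₀ : ℕ)
    (hmax : ∀ i, (A i).card ≤ n₀) (hattain : ∃ i, (A i).card = n₀)
    (G₀ P : Finset C) (hP : P ⊆ G₀) (p : ℕ) (hp : P.card = p) (hlt : n₀ < p) :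
    ∑ Q ∈ P.powerset, (-1 : ℤ) ^ (p - Q.card) *
      ∑ i : Fin t, lam i *
        ∑ D' ∈ ((G₀ \ P) ∪ Q).powerset, (if A i = D' then (1 : ℤ) else 0) = 0 :=
  stmt_10_general t lam A n₀ hmax G₀ P p hp hlt
end

section
/- Let X be a type and x, y ∈ X. Suppose there exist n+1 pairwise commuting functions g₁,…,g_{n+1} : X → X such that applying any nonempty subfamily to x yields y, and each g_i factors as h_{2i-1} ∘ h_{2i} with all h_j pairwise commuting and each h_j² = id. Then there exist 2(n+1) pairwise commuting involutions (namely the h_j) such that applying all the moves in any nonempty subfamily of the n+1 paired families {h_{2i-1}, h_{2i}} to x yields y. -/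
theorem stmt_15 {X : Type*} (n : ℕ) (x y : X)
    (h : Fin (2 * n + 2) → Function.End X)
    (hc : ∀ j k, Commute (h j) (h k))
    (hinv : ∀ j, h j * h j = 1)
    (g : Fin (n + 1) → Function.End X)
    (gc : ∀ i j, Commute (g i) (g j))
    (hg : ∀ i : Fin (n + 1),
      g i = h ⟨2 * i.val, by have := i.isLt; omega⟩ *
            h ⟨2 * i.val + 1, by have := i.isLt; omega⟩)
    (hsim : ∀ δ : Finset (Fin (n + 1)), δ.Nonempty →
      (δ.noncommProd g fun a _ b _ _ => gc a b) x = y) :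
    ∀ δ : Finset (Fin (n + 1)), δ.Nonempty →
      ((δ.biUnion fun i =>
          ({⟨2 * i.val, by have := i.isLt; omega⟩,
            ⟨2 * i.val + 1, by have := i.isLt; omega⟩} :
            Finset (Fin (2 * n + 2)))).noncommProd h
        fun a _ b _ _ => hc a b) x = y := by
  have key : ∀ δ : Finset (Fin (n + 1)),
      ((δ.biUnion fun i =>
          ({⟨2 * i.val, by have := i.isLt; omega⟩,
            ⟨2 * i.val + 1, by have := i.isLt; omega⟩} :
            Finset (Fin (2 * n + 2)))).noncommProd h
        fun a _ b _ _ => hc a b) =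
      δ.noncommProd g fun a _ b _ _ => gc a b := by
    intro δ
    induction δ using Finset.induction with
    | empty => simp; exact (Finset.noncommProd_empty g _).symm
    | @insert a s ha ih =>
      rw [Finset.biUnion_insert]
      have hdisj : Disjoint
          ({⟨2 * a.val, by have := a.isLt; omega⟩,
            ⟨2 * a.val + 1, by have := a.isLt; omega⟩} :
            Finset (Fin (2 * n + 2)))
          (s.biUnion fun i =>
            ({⟨2 * i.val, by have := i.isLt; omega⟩,
              ⟨2 * i.val + 1, by have := i.isLt; omega⟩} :
              Finset (Fin (2 * n + 2)))) := by
        simp only [Finset.disjoint_left, Finset.mem_insert, Finset.mem_singleton,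
          Finset.mem_biUnion]
        rintro j (rfl | rfl) ⟨b, hb, (hj | hj)⟩ <;>
        · have hba : b ≠ a := fun e => ha (e ▸ hb)
          have := congrArg Fin.val hj
          simp at this
          exact hba (Fin.ext (by omega))
      refine (Finset.noncommProd_union_of_disjoint hdisj h _).trans
        (Eq.trans ?_ (Finset.noncommProd_insert_of_notMem _ _ _ _ ha).symm)
      rw [ih]
      congr 1
      have hne : (⟨2 * a.val, by have := a.isLt; omega⟩ : Fin (2 * n + 2)) ∉
          ({⟨2 * a.val + 1, by have := a.isLt; omega⟩} : Finset (Fin (2 * n + 2))) := by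
        simp [Fin.ext_iff]
      rw [Finset.noncommProd_insert_of_notMem _ _ _ _ hne,
        Finset.noncommProd_singleton, hg a]
  intro δ hδ
  rw [key]
  exact hsim δ hδ
end
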